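/- Pincherle convolution formula: if F and G are holomorphic functions given by power series with radii of convergence R_F and R_G, and |z| < r·R_G and r < R_F for some r > 0, then (F ⊙ G)(z) = (1/2πi) ∫_{|u|=r} F(u) G(z/u) du/u, where the circle is positively oriented. -/

import Mathlib

/-!
On the circle `‖u‖ = r` both `F u = ∑ Aₙ uⁿ` and `G (z / u) = ∑ Bₘ (z / u)ᵐ` converge absolutely,
with terms bounded uniformly in `u`, so the integrand `F u * G (z / u) / u` is the sum of the double
series `∑ Aₙ Bₘ uⁿ (z / u)ᵐ / u`, which may be integrated termwise by dominated convergence.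
Since `uⁿ (z / u)ᵐ / u = zᵐ u^(n - m - 1)`, only the diagonal terms `n = m` survive, each
contributing `2πi Aₙ Bₙ zⁿ`.
-/

open Complex Metric Filter Set

theorem summable_norm_mul_pow_of_summable_mul_pow {B : ℕ → ℂ} {t s : ℝ}
    (hB : Summable fun n => B n * (t : ℂ) ^ n) (hs : 0 ≤ s) (hst : s < t) :
    Summable fun n => ‖B n‖ * s ^ n := by
  have ht : 0 < t := hs.trans_lt hst
  have hbdd : (fun n => B n * (t : ℂ) ^ n) =O[atTop] fun n => ((n ^ 0 : ℕ) : ℂ) := by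
    simpa using hB.tendsto_atTop_zero.isBigO_one ℂ
  have hratio : ‖((s / t : ℝ) : ℂ)‖ < 1 := by
    rw [norm_real, Real.norm_of_nonneg (by positivity)]
    exact (div_lt_one ht).2 hst
  refine (summable_norm_mul_geometric_of_norm_lt_one' hratio hbdd).congr fun n => ?_
  rw [norm_mul, norm_mul, norm_pow, norm_pow, norm_real, norm_real, Real.norm_of_nonneg ht.le,
    Real.norm_of_nonneg (by positivity), div_pow]
  field_simp

theorem summable_norm_mul_pow_of_lt {A : ℕ → ℂ} {R s : ℝ}
    (hA : ∀ w : ℂ, ‖w‖ < R → Summable fun n => A n * w ^ n) (hs : 0 ≤ s) (hsR : s < R) :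
    Summable fun n => ‖A n‖ * s ^ n := by
  obtain ⟨t, hst, htR⟩ := exists_between hsR
  refine summable_norm_mul_pow_of_summable_mul_pow (hA t ?_) hs hst
  rwa [norm_real, Real.norm_of_nonneg (hs.trans hst.le)]

theorem circleIntegral_pow_mul_div_pow_div {r : ℝ} (hr : 0 < r) (z : ℂ) (n m : ℕ) :
    (∮ u in C(0, r), u ^ n * (z / u) ^ m / u) = if n = m then 2 * Real.pi * I * z ^ n else 0 := by
  have hzpow : EqOn (fun u => u ^ n * (z / u) ^ m / u)
      (fun u => z ^ m * (u - 0) ^ ((n : ℤ) - m - 1)) (sphere (0 : ℂ) r) := by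
    intro u hu
    have hu0 : u ≠ 0 := ne_zero_of_mem_sphere hr.ne' ⟨u, hu⟩
    simp only [sub_zero, div_pow, zpow_sub₀ hu0, zpow_natCast, zpow_one]
    field_simp
  rw [circleIntegral.integral_congr hr.le hzpow, circleIntegral.integral_const_mul]
  split_ifs with hnm
  · subst hnm
    rw [show (n : ℤ) - n - 1 = -1 by ring]
    simp only [zpow_neg_one, circleIntegral.integral_sub_center_inv 0 hr.ne']
    ring
  · rw [circleIntegral.integral_sub_zpow_of_ne (by omega), mul_zero]

theorem circleIntegral.hasSum_integral_of_dominated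
    {E : Type*} [NormedAddCommGroup E] [NormedSpace ℂ E] {ι : Type*} [Countable ι]
    {f : ι → ℂ → E} {g : ℂ → E} {c : ℂ} {R : ℝ} (bound : ι → ℝ)
    (hf : ∀ i, CircleIntegrable (f i) c R) (hbound : ∀ i, ∀ w ∈ sphere c |R|, ‖f i w‖ ≤ bound i)
    (hsum : Summable bound) (hlim : ∀ w ∈ sphere c |R|, HasSum (fun i => f i w) (g w)) :
    HasSum (fun i => ∮ w in C(c, R), f i w) (∮ w in C(c, R), g w) := by
  refine intervalIntegral.hasSum_integral_of_dominated_convergence (fun i _ => |R| * bound i)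
    (fun i => ?_) (fun i => ?_) ?_ intervalIntegrable_const ?_
  · simp only [deriv_circleMap]
    exact (Continuous.aestronglyMeasurable (by fun_prop)).smul (hf i).def'.1
  · refine .of_forall fun θ _ => ?_
    rw [norm_smul, deriv_circleMap, norm_mul, norm_circleMap_zero, norm_I, mul_one]
    exact mul_le_mul_of_nonneg_left (hbound i _ (circleMap_mem_sphere' c R θ)) (abs_nonneg R)
  · exact .of_forall fun θ _ => hsum.mul_left |R|
  · exact .of_forall fun θ _ => (hlim _ (circleMap_mem_sphere' c R θ)).const_smul _

theorem hasSum_circleIntegral_mul_comp_div {F G : ℂ → ℂ} {A B : ℕ → ℂ} {r : ℝ} {z : ℂ}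
    (hr : 0 < r) (hF : ∀ u : ℂ, ‖u‖ = r → HasSum (fun n => A n * u ^ n) (F u))
    (hG : ∀ w : ℂ, ‖w‖ = ‖z‖ / r → HasSum (fun n => B n * w ^ n) (G w))
    (hA : Summable fun n => ‖A n‖ * r ^ n) (hB : Summable fun n => ‖B n‖ * (‖z‖ / r) ^ n) :
    HasSum (fun p : ℕ × ℕ => A p.1 * B p.2 * ∮ u in C(0, r), u ^ p.1 * (z / u) ^ p.2 / u)
      (∮ u in C(0, r), F u * G (z / u) / u) := by
  have hnorm : ∀ u ∈ sphere (0 : ℂ) |r|, ‖u‖ = r ∧ ‖z / u‖ = ‖z‖ / r := by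
    intro u hu
    rw [mem_sphere_zero_iff_norm, abs_of_pos hr] at hu
    exact ⟨hu, by rw [norm_div, hu]⟩
  simp only [← circleIntegral.integral_const_mul]
  refine circleIntegral.hasSum_integral_of_dominated
    (fun p => ‖A p.1‖ * r ^ p.1 * (‖B p.2‖ * (‖z‖ / r) ^ p.2) / r) (fun p => ?_) (fun p u hu => ?_)
    ((hA.mul_of_nonneg hB (fun _ => by positivity) fun _ => by positivity).div_const r)
    (fun u hu => ?_)
  · refine ContinuousOn.circleIntegrable hr.le ?_
    have : ∀ u ∈ sphere (0 : ℂ) r, u ≠ 0 := fun u hu => ne_zero_of_mem_sphere hr.ne' ⟨u, hu⟩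
    fun_prop (disch := assumption)
  · obtain ⟨hu, hzu⟩ := hnorm u hu
    rw [norm_mul, norm_div, norm_mul, norm_mul, norm_pow, norm_pow, hu, hzu]
    apply le_of_eq
    ring
  · obtain ⟨hu, hzu⟩ := hnorm u hu
    have hAu : Summable fun n => ‖A n * u ^ n‖ := by simpa only [norm_mul, norm_pow, hu] using hA
    have hBu : Summable fun n => ‖B n * (z / u) ^ n‖ := by
      simpa only [norm_mul, norm_pow, hzu] using hB
    have hprod := HasSum.mul (f := fun n => A n * u ^ n) (g := fun n => B n * (z / u) ^ n)
      (hF u hu) (hG (z / u) hzu) (hAu.mul_norm hBu).of_norm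
    have hterm : (fun p : ℕ × ℕ => A p.1 * u ^ p.1 * (B p.2 * (z / u) ^ p.2) / u) =
        fun p => A p.1 * B p.2 * (u ^ p.1 * (z / u) ^ p.2 / u) := by
      ext p
      ring
    exact hterm ▸ hprod.div_const u

theorem hasSum_ite_fst_eq_snd_iff {α β : Type*} [AddCommMonoid α] [TopologicalSpace α]
    [DecidableEq β] {f : β × β → α} {a : α} :
    HasSum (fun p : β × β => if p.1 = p.2 then f p else 0) a ↔ HasSum (fun b => f (b, b)) a := by
  have hdiag : Function.Injective fun b : β => (b, b) := fun b b' h => congrArg Prod.fst h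
  rw [← hdiag.hasSum_iff]
  · simp [Function.comp_def]
  · rintro ⟨b, b'⟩ hp
    exact if_neg fun h : b = b' => hp ⟨b, by rw [h]⟩

/-- Pincherle convolution formula: if `F(w) = Σ Aₙ wⁿ` on `‖w‖ < R_F` and
`G(w) = Σ Bₙ wⁿ` on `‖w‖ < R_G`, and `0 < r < R_F`, `‖z‖ < r·R_G` (i.e. `‖z‖/R_G < r`),
then the Hadamard product satisfies
`(F ⊙ G)(z) = (1/2πi) ∮_{|u|=r} F(u) G(z/u) du/u`. -/
theorem pincherle_convolution (F G : ℂ → ℂ) (A B : ℕ → ℂ) (RF RG r : ℝ) (z : ℂ)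
    (hr : 0 < r) (hrF : r < RF) (hz : ‖z‖ < r * RG)
    (hF : ∀ w : ℂ, ‖w‖ < RF → HasSum (fun n => A n * w ^ n) (F w))
    (hG : ∀ w : ℂ, ‖w‖ < RG → HasSum (fun n => B n * w ^ n) (G w)) :
    ∑' n : ℕ, A n * B n * z ^ n =
      (2 * Real.pi * I)⁻¹ * circleIntegral (fun u => F u * G (z / u) / u) 0 r := by
  have hzr : ‖z‖ / r < RG := (div_lt_iff₀' hr).2 hz
  have hterms := hasSum_circleIntegral_mul_comp_div hr
    (fun u hu => hF u (hu ▸ hrF)) (fun w hw => hG w (hw ▸ hzr))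
    (summable_norm_mul_pow_of_lt (fun w hw => (hF w hw).summable) hr.le hrF)
    (summable_norm_mul_pow_of_lt (fun w hw => (hG w hw).summable) (by positivity) hzr)
  simp only [circleIntegral_pow_mul_div_pow_div hr, mul_ite, mul_zero,
    hasSum_ite_fst_eq_snd_iff] at hterms
  have h2πI : (2 * Real.pi * I : ℂ) ≠ 0 := by simp [Real.pi_ne_zero, I_ne_zero]
  rw [eq_inv_mul_iff_mul_eq₀ h2πI, ← hterms.tsum_eq, ← tsum_mul_left]
  congr 1 with n
  ring
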